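/- arXiv:1710.01413 — 2 statements merged into one kernel-verified Lean document; each statement's English description precedes it below -/
import Mathlib

section
/- Let L₁, …, Lₙ be bounded operators and H a self-adjoint bounded operator on a complex Hilbert space ℌ, let U = [u_{jk}] be a unitary n×n complex matrix, let β₁, …, βₙ be complex numbers, and let ε be a real number. Define L'_k = Σ_j u_{kj} L_j + β_k·I and H' = H + ε·I + Σ_k (conj(β_k)·(Σ_j u_{kj}L_j) − β_k·(Σ_j u_{kj}L_j)*)/(2i). Then for every bounded operator X on ℌ, 𝓛_(L',H')(X) = 𝓛_(L,H)(X); that is, the GKS-Lindblad generator is invariant under the action of any element (U, β, ε) of the central extension of the Euclidean group, applied via the series product. -/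
/-- The GKS-Lindblad generator associated with collapse operators `L k` and
Hamiltonian `Ham`, acting on a bounded operator `X`:
`𝓛_(L,H)(X) = (1/2) Σ_k ([L_k*, X] L_k + L_k* [X, L_k]) − i [X, H]`. -/
noncomputable def lindblad {𝓗 : Type*} [NormedAddCommGroup 𝓗] [InnerProductSpace ℂ 𝓗]
    [CompleteSpace 𝓗] {n : ℕ} (L : Fin n → 𝓗 →L[ℂ] 𝓗) (Ham : 𝓗 →L[ℂ] 𝓗)
    (X : 𝓗 →L[ℂ] 𝓗) : 𝓗 →L[ℂ] 𝓗 :=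
  (1 / 2 : ℂ) • (∑ k, ((ContinuousLinearMap.adjoint (L k) * X - X * ContinuousLinearMap.adjoint (L k)) * L k
      + ContinuousLinearMap.adjoint (L k) * (X * L k - L k * X)))
    - Complex.I • (X * Ham - Ham * X)

open ContinuousLinearMap in
/-- Unitary invariance of sandwich sums. -/
theorem lindblad_sandwich_aux {𝓗 : Type*} [NormedAddCommGroup 𝓗] [InnerProductSpace ℂ 𝓗]
    [CompleteSpace 𝓗] {n : ℕ} (L : Fin n → 𝓗 →L[ℂ] 𝓗)
    (U : Matrix (Fin n) (Fin n) ℂ) (hU : U ∈ Matrix.unitaryGroup (Fin n) ℂ)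
    (Y : 𝓗 →L[ℂ] 𝓗) :
    ∑ k, adjoint (∑ j, U k j • L j) * Y * (∑ j, U k j • L j)
      = ∑ k, adjoint (L k) * Y * L k := by
  have hUU : star U * U = 1 := hU.1
  have hentry : ∀ i j, (∑ k, (starRingEnd ℂ) (U k i) * U k j) = if i = j then 1 else 0 := by
    intro i j
    have h : ∀ k, (starRingEnd ℂ) (U k i) * U k j = (star U) i k * U k j := by
      intro k; rw [Matrix.star_apply, starRingEnd_apply]
    rw [Finset.sum_congr rfl fun k _ => h k, ← Matrix.mul_apply, hUU, Matrix.one_apply]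
  calc ∑ k, adjoint (∑ j, U k j • L j) * Y * (∑ j, U k j • L j)
      = ∑ k, ∑ i, ∑ j, ((starRingEnd ℂ) (U k i) * U k j) • (adjoint (L i) * Y * L j) := by
        refine Finset.sum_congr rfl fun k _ => ?_
        rw [map_sum]
        simp only [map_smulₛₗ, Finset.sum_mul, Finset.mul_sum, smul_mul_assoc,
          mul_smul_comm, smul_smul, Finset.smul_sum]
        rw [Finset.sum_comm]
        refine Finset.sum_congr rfl fun i _ => Finset.sum_congr rfl fun j _ => ?_
        congr 1
        ring
    _ = ∑ i, ∑ j, (∑ k, (starRingEnd ℂ) (U k i) * U k j) • (adjoint (L i) * Y * L j) := by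
        rw [Finset.sum_comm]
        refine Finset.sum_congr rfl fun i _ => ?_
        rw [Finset.sum_comm]
        refine Finset.sum_congr rfl fun j _ => ?_
        rw [Finset.sum_smul]
    _ = ∑ k, adjoint (L k) * Y * L k := by
        simp [hentry, Finset.sum_ite_eq]

/-- Per-term expansion of the dissipator under a shift by a scalar. -/
theorem lindblad_expand_aux {A : Type*} [Ring A] [Algebra ℂ A] [StarRing A] [StarModule ℂ A]
    (a x : A) (c : ℂ) :
    ((star (a + c • 1)) * x - x * star (a + c • 1)) * (a + c • 1)
      + star (a + c • 1) * (x * (a + c • 1) - (a + c • 1) * x)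
    = ((star a * x - x * star a) * a + star a * (x * a - a * x))
      + (c • (star a * x - x * star a) + (starRingEnd ℂ) c • (x * a - a * x)) := by
  simp only [star_add, star_smul, star_one, mul_add, add_mul, sub_mul, mul_sub,
    smul_mul_assoc, mul_smul_comm, mul_one, one_mul, mul_assoc, starRingEnd_apply]
  module

open ContinuousLinearMap in
/-- Regrouping the dissipator sum into sandwich sums. -/
theorem lindblad_regroup_aux {𝓗 : Type*} [NormedAddCommGroup 𝓗] [InnerProductSpace ℂ 𝓗]
    [CompleteSpace 𝓗] {n : ℕ} (M : Fin n → 𝓗 →L[ℂ] 𝓗) (X : 𝓗 →L[ℂ] 𝓗) :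
    ∑ k, ((adjoint (M k) * X - X * adjoint (M k)) * M k
        + adjoint (M k) * (X * M k - M k * X))
    = (∑ k, adjoint (M k) * X * M k) + (∑ k, adjoint (M k) * X * M k)
        - X * (∑ k, adjoint (M k) * 1 * M k) - (∑ k, adjoint (M k) * 1 * M k) * X := by
  rw [Finset.mul_sum, Finset.sum_mul, ← Finset.sum_add_distrib, ← Finset.sum_sub_distrib,
    ← Finset.sum_sub_distrib]
  refine Finset.sum_congr rfl fun k _ => ?_
  noncomm_ring

theorem lindblad_euclidean_group_invariance {𝓗 : Type*} [NormedAddCommGroup 𝓗]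
    [InnerProductSpace ℂ 𝓗] [CompleteSpace 𝓗]
    (n : ℕ) (L : Fin n → 𝓗 →L[ℂ] 𝓗) (Ham : 𝓗 →L[ℂ] 𝓗) (hH : IsSelfAdjoint Ham)
    (U : Matrix (Fin n) (Fin n) ℂ) (hU : U ∈ Matrix.unitaryGroup (Fin n) ℂ)
    (β : Fin n → ℂ) (ε : ℝ)
    (L' : Fin n → 𝓗 →L[ℂ] 𝓗)
    (hL' : ∀ k, L' k = (∑ j, U k j • L j) + β k • (1 : 𝓗 →L[ℂ] 𝓗))
    (Ham' : 𝓗 →L[ℂ] 𝓗)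
    (hHam' : Ham' = Ham + (ε : ℂ) • (1 : 𝓗 →L[ℂ] 𝓗)
      + (2 * Complex.I)⁻¹ • (∑ k, ((starRingEnd ℂ) (β k) • (∑ j, U k j • L j)
          - β k • ContinuousLinearMap.adjoint (∑ j, U k j • L j))))
    (X : 𝓗 →L[ℂ] 𝓗) :
    lindblad L' Ham' X = lindblad L Ham X := by
  classical
  open ContinuousLinearMap in
  set A : Fin n → 𝓗 →L[ℂ] 𝓗 := fun k => ∑ j, U k j • L j with hA
  -- the dissipator split
  have hsplit : ∑ k, ((adjoint (L' k) * X - X * adjoint (L' k)) * L' k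
        + adjoint (L' k) * (X * L' k - L' k * X))
      = (∑ k, ((adjoint (A k) * X - X * adjoint (A k)) * A k
          + adjoint (A k) * (X * A k - A k * X)))
        + ∑ k, (β k • (adjoint (A k) * X - X * adjoint (A k))
          + (starRingEnd ℂ) (β k) • (X * A k - A k * X)) := by
    rw [← Finset.sum_add_distrib]
    refine Finset.sum_congr rfl fun k _ => ?_
    rw [hL' k]
    exact lindblad_expand_aux (A k) X (β k)
  -- dissipator of A equals dissipator of L
  have hdiss : ∑ k, ((adjoint (A k) * X - X * adjoint (A k)) * A k
        + adjoint (A k) * (X * A k - A k * X))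
      = ∑ k, ((adjoint (L k) * X - X * adjoint (L k)) * L k
        + adjoint (L k) * (X * L k - L k * X)) := by
    rw [lindblad_regroup_aux A X, lindblad_regroup_aux L X,
      lindblad_sandwich_aux L U hU X, lindblad_sandwich_aux L U hU 1]
  -- Hamiltonian part
  have hham : Complex.I • (X * Ham' - Ham' * X)
      = Complex.I • (X * Ham - Ham * X)
        + (1 / 2 : ℂ) • ∑ k, (β k • (adjoint (A k) * X - X * adjoint (A k))
          + (starRingEnd ℂ) (β k) • (X * A k - A k * X)) := by
    rw [hHam']
    set B : 𝓗 →L[ℂ] 𝓗 := ∑ k, ((starRingEnd ℂ) (β k) • A k - β k • adjoint (A k)) with hB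
    have hXB : X * B - B * X = ∑ k, (β k • (adjoint (A k) * X - X * adjoint (A k))
        + (starRingEnd ℂ) (β k) • (X * A k - A k * X)) := by
      rw [hB, Finset.mul_sum, Finset.sum_mul, ← Finset.sum_sub_distrib]
      refine Finset.sum_congr rfl fun k _ => ?_
      simp only [mul_sub, sub_mul, mul_smul_comm, smul_mul_assoc, smul_sub]
      module
    have hI : Complex.I * (2 * Complex.I)⁻¹ = (1 / 2 : ℂ) := by
      field_simp
    calc Complex.I • (X * (Ham + (ε : ℂ) • 1 + (2 * Complex.I)⁻¹ • B)
          - (Ham + (ε : ℂ) • 1 + (2 * Complex.I)⁻¹ • B) * X)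
        = Complex.I • ((X * Ham - Ham * X) + (2 * Complex.I)⁻¹ • (X * B - B * X)) := by
          congr 1
          simp only [mul_add, add_mul, mul_smul_comm, smul_mul_assoc, mul_one, one_mul,
            smul_sub]
          abel
      _ = Complex.I • (X * Ham - Ham * X)
          + (Complex.I * (2 * Complex.I)⁻¹) • (X * B - B * X) := by
          rw [smul_add, smul_smul]
      _ = _ := by rw [hI, hXB]
  -- put it together
  rw [lindblad, lindblad, hsplit, hdiss, smul_add, hham]
  abel
end

section
/- Let ℌ be a complex Hilbert space, let ψ ∈ ℌ be a unit vector, let L₁, …, Lₙ be bounded operators on ℌ, and set λ_k = ⟨ψ, (L_k + L_k*)ψ⟩ for each k (each λ_k is a real number). If Σ_{k=1}^n λ_k·L_k = (1/4)(Σ_{k=1}^n λ_k²)·I as operators on ℌ, then λ_k = 0 for all k. -/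
/-!
Write `A = ∑ λₖ Lₖ`. Since `λₖ = 2 re ⟪ψ, Lₖ ψ⟫`, pairing with the coefficients gives
`∑ λₖ² = 2 re ⟪ψ, A ψ⟫`, while `A = (∑ λₖ² / 4) • 1` gives `2 re ⟪ψ, A ψ⟫ = ∑ λₖ² / 2`.
Hence `∑ λₖ² = 0`.
-/

open ContinuousLinearMap

section

variable {𝕜 E : Type*} [RCLike 𝕜] [NormedAddCommGroup E] [InnerProductSpace 𝕜 E]

theorem inner_add_adjoint_apply_self [CompleteSpace E] (T : E →L[𝕜] E) (ψ : E) :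
    inner 𝕜 ψ ((T + adjoint T) ψ) = 2 * (RCLike.re (inner 𝕜 ψ (T ψ)) : 𝕜) := by
  rw [add_apply, inner_add_right, adjoint_inner_right, ← inner_conj_symm (T ψ) ψ, RCLike.add_conj]

theorem re_inner_sum_ofReal_smul_apply {ι : Type*} (s : Finset ι) (c : ι → ℝ)
    (T : ι → E →L[𝕜] E) (ψ : E) :
    RCLike.re (inner 𝕜 ψ ((∑ k ∈ s, (c k : 𝕜) • T k) ψ))
      = ∑ k ∈ s, c k * RCLike.re (inner 𝕜 ψ (T k ψ)) := by
  simp only [sum_apply, smul_apply, inner_sum, inner_smul_right, map_sum, RCLike.re_ofReal_mul]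

theorem re_inner_ofReal_smul_one_apply {ψ : E} (hψ : ‖ψ‖ = 1) (r : ℝ) :
    RCLike.re (inner 𝕜 ψ (((r : 𝕜) • (1 : E →L[𝕜] E)) ψ)) = r := by
  simp [inner_smul_right, hψ]

end

theorem lambda_contradiction_step {𝓗 : Type*} [NormedAddCommGroup 𝓗]
    [InnerProductSpace ℂ 𝓗] [CompleteSpace 𝓗]
    (ψ : 𝓗) (hψ : ‖ψ‖ = 1)
    (n : ℕ) (L : Fin n → 𝓗 →L[ℂ] 𝓗) (lam : Fin n → ℝ)
    (hlam : ∀ k, (lam k : ℂ) = inner ℂ ψ (((L k) + ContinuousLinearMap.adjoint (L k)) ψ))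
    (hid : ∑ k, (lam k : ℂ) • L k
      = (((1 / 4 : ℝ) * ∑ k, lam k ^ 2 : ℝ) : ℂ) • (1 : 𝓗 →L[ℂ] 𝓗)) :
    ∀ k, lam k = 0 := by
  have hlam_re (k : Fin n) : lam k = 2 * RCLike.re (inner ℂ ψ (L k ψ)) := by
    have h : (lam k : ℂ) = 2 * (RCLike.re (inner ℂ ψ (L k ψ)) : ℂ) :=
      (hlam k).trans (inner_add_adjoint_apply_self (L k) ψ)
    exact_mod_cast h
  -- restated over `ℂ` so that the casts are `Complex.ofReal`, as in `hid`, rather than `RCLike.ofReal`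
  have hpair : RCLike.re (inner ℂ ψ ((∑ k, (lam k : ℂ) • L k) ψ))
      = ∑ k, lam k * RCLike.re (inner ℂ ψ (L k ψ)) :=
    re_inner_sum_ofReal_smul_apply _ _ _ _
  have hscalar (r : ℝ) : RCLike.re (inner ℂ ψ (((r : ℂ) • (1 : 𝓗 →L[ℂ] 𝓗)) ψ)) = r :=
    re_inner_ofReal_smul_one_apply hψ r
  have hS : ∑ k, lam k ^ 2 = 0 := by
    have : ∑ k, lam k ^ 2 = 2 * ((1 / 4 : ℝ) * ∑ k, lam k ^ 2) := by
      calc ∑ k, lam k ^ 2 = 2 * ∑ k, lam k * RCLike.re (inner ℂ ψ (L k ψ)) := by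
            rw [Finset.mul_sum]
            exact Finset.sum_congr rfl fun k _ => by rw [sq, hlam_re k]; ring
        _ = 2 * ((1 / 4 : ℝ) * ∑ k, lam k ^ 2) := by rw [← hpair, hid, hscalar]
    linarith
  intro k
  exact pow_eq_zero_iff two_ne_zero |>.mp <|
    (Finset.sum_eq_zero_iff_of_nonneg fun i _ => sq_nonneg (lam i)).mp hS k (Finset.mem_univ k)
end
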